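/- Let C_S5 be the class of all Kripke models (W,R,⊩) such that W is finite and nonempty and R = W×W. Then C_S5 enjoys 1-IP. -/

import Mathlib

/-- Modal formulas over countably many variables. -/
inductive ModalForm : Type where
  | var : ℕ → ModalForm
  | bot : ModalForm
  | and : ModalForm → ModalForm → ModalForm
  | or : ModalForm → ModalForm → ModalForm
  | not : ModalForm → ModalForm
  | imp : ModalForm → ModalForm → ModalForm
  | box : ModalForm → ModalForm

namespace ModalForm

mutual
  /-- positively occurring variables -/
  def vpos : ModalForm → Finset ℕ
    | var p => {p}
    | bot => ∅
    | and φ ψ => vpos φ ∪ vpos ψ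
    | or φ ψ => vpos φ ∪ vpos ψ
    | not φ => vneg φ
    | imp φ ψ => vneg φ ∪ vpos ψ
    | box φ => vpos φ
  /-- negatively occurring variables -/
  def vneg : ModalForm → Finset ℕ
    | var _ => ∅
    | bot => ∅
    | and φ ψ => vneg φ ∪ vneg ψ
    | or φ ψ => vneg φ ∪ vneg ψ
    | not φ => vpos φ
    | imp φ ψ => vpos φ ∪ vneg ψ
    | box φ => vneg φ
end

/-- Modal depth: maximal nesting of `□`. -/
def depth : ModalForm → ℕ
  | var _ => 0
  | bot => 0
  | and φ ψ => max (depth φ) (depth ψ)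
  | or φ ψ => max (depth φ) (depth ψ)
  | not φ => depth φ
  | imp φ ψ => max (depth φ) (depth ψ)
  | box φ => depth φ + 1

/-- `◇φ := ¬□¬φ` -/
def dia (φ : ModalForm) : ModalForm := not (box (not φ))

/-- `⊤ := ¬⊥` -/
def top : ModalForm := not bot

end ModalForm

/-- An S4 Kripke frame: nonempty set of worlds with a reflexive transitive relation. -/
structure KFrame : Type 1 where
  W : Type
  R : W → W → Prop
  nonempty : Nonempty W
  refl : ∀ x, R x x
  trans : ∀ x y z, R x y → R y z → R x z

/-- A Kripke model: a frame with a valuation. -/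
structure KModel : Type 1 extends KFrame where
  val : W → ℕ → Prop

/-- The model based on frame `F` with valuation `V`. -/
def KFrame.toModel (F : KFrame) (V : F.W → ℕ → Prop) : KModel :=
  { toKFrame := F, val := V }

/-- Satisfaction in a Kripke model. -/
def KModel.Sat (M : KModel) : M.W → ModalForm → Prop
  | w, .var p => M.val w p
  | _, .bot => False
  | w, .and φ ψ => M.Sat w φ ∧ M.Sat w ψ
  | w, .or φ ψ => M.Sat w φ ∨ M.Sat w ψ
  | w, .not φ => ¬ M.Sat w φ
  | w, .imp φ ψ => M.Sat w φ → M.Sat w ψ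
  | w, .box φ => ∀ y, M.R w y → M.Sat y φ

/-- `(M0,w0) →ₙ^{(P⁺,P⁻)} (M1,w1)`: every `(P⁺,P⁻)`-formula of depth ≤ n
satisfied at `(M0,w0)` is satisfied at `(M1,w1)`. -/
def ModalArrow (Pp Pm : Finset ℕ) (n : ℕ) (M0 : KModel) (w0 : M0.W)
    (M1 : KModel) (w1 : M1.W) : Prop :=
  ∀ φ : ModalForm, φ.vpos ⊆ Pp → φ.vneg ⊆ Pm → φ.depth ≤ n →
    M0.Sat w0 φ → M1.Sat w1 φ

/-- p-morphism between frames. -/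
def PMorphism (F G : KFrame) (f : F.W → G.W) : Prop :=
  (∀ x y, F.R x y → G.R (f x) (f y)) ∧
  (∀ x w, G.R (f x) w → ∃ z, F.R x z ∧ f z = w)

/-- The class `C` of Kripke models enjoys `n`-IP. -/
def EnjoysIP (C : Set KModel) (n : ℕ) : Prop :=
  ∀ (Pp Pm : Finset ℕ) (M0 M1 : KModel), M0 ∈ C → M1 ∈ C →
    ∀ (w0 : M0.W) (w1 : M1.W), ModalArrow Pp Pm n M0 w0 M1 w1 →
      ∃ (F : KFrame) (wstar : F.W) (f0 : F.W → M0.W) (f1 : F.W → M1.W),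
        (∀ V : F.W → ℕ → Prop, F.toModel V ∈ C) ∧
        PMorphism F M0.toKFrame f0 ∧
        PMorphism F M1.toKFrame f1 ∧
        f0 wstar = w0 ∧ f1 wstar = w1 ∧
        ∀ x : F.W, ModalArrow Pp Pm 0 M0 (f0 x) M1 (f1 x)

/-- A world is final iff every successor is also a predecessor. -/
def KModel.Final (M : KModel) (w : M.W) : Prop := ∀ y, M.R w y → M.R y w

/-- The cluster of a world. -/
def KModel.cluster (M : KModel) (w : M.W) : Set M.W := {u | M.R w u ∧ M.R u w}

/-- Cluster `C0` of `M0` matches cluster `C1` of `M1`. -/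
def Matches (Pp Pm : Finset ℕ) (M0 M1 : KModel) (C0 : Set M0.W) (C1 : Set M1.W) : Prop :=
  (∀ u0 ∈ C0, ∃ u1 ∈ C1, ModalArrow Pp Pm 0 M0 u0 M1 u1) ∧
  (∀ u1 ∈ C1, ∃ u0 ∈ C0, ModalArrow Pp Pm 0 M0 u0 M1 u1)

/-- `φ` is satisfied at every world of every model in `C`. -/
def ValidOn (C : Set KModel) (φ : ModalForm) : Prop :=
  ∀ M ∈ C, ∀ w : M.W, M.Sat w φ

/-- The class of S5 models: finite nonempty set of worlds with total relation. -/
def C_S5 : Set KModel := {M | Finite M.W ∧ ∀ x y : M.W, M.R x y}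

/-!
The amalgamating frame is the total frame on all pairs `(u0, u1)` with `(M0, u0) →₀ (M1, u1)`.
Depth-one preservation at `(w0, w1)` gives the forth and back conditions, so both projections
are onto, and onto maps between total frames are p-morphisms.
-/

namespace ModalForm

def InFragment (Pp Pm : Finset ℕ) (n : ℕ) (φ : ModalForm) : Prop :=
  φ.vpos ⊆ Pp ∧ φ.vneg ⊆ Pm ∧ φ.depth ≤ n

def bigAnd : List ModalForm → ModalForm
  | [] => top
  | φ :: l => and φ (bigAnd l)

def bigOr : List ModalForm → ModalForm
  | [] => bot
  | φ :: l => or φ (bigOr l)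

noncomputable def iConj {ι : Type*} [Fintype ι] (g : ι → ModalForm) : ModalForm :=
  bigAnd (Finset.univ.toList.map g)

noncomputable def iDisj {ι : Type*} [Fintype ι] (g : ι → ModalForm) : ModalForm :=
  bigOr (Finset.univ.toList.map g)

variable {Pp Pm : Finset ℕ} {n : ℕ}

theorem InFragment.bigAnd {l : List ModalForm} (h : ∀ φ ∈ l, InFragment Pp Pm n φ) :
    InFragment Pp Pm n (bigAnd l) := by
  induction l with
  | nil => simp [ModalForm.bigAnd, InFragment, top, vpos, vneg, depth]
  | cons φ l ih =>
    obtain ⟨hp, hm, hd⟩ := h φ List.mem_cons_self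
    obtain ⟨ihp, ihm, ihd⟩ := ih fun ψ hψ => h ψ (List.mem_cons_of_mem φ hψ)
    exact ⟨Finset.union_subset hp ihp, Finset.union_subset hm ihm, max_le hd ihd⟩

theorem InFragment.bigOr {l : List ModalForm} (h : ∀ φ ∈ l, InFragment Pp Pm n φ) :
    InFragment Pp Pm n (bigOr l) := by
  induction l with
  | nil => simp [ModalForm.bigOr, InFragment, vpos, vneg, depth]
  | cons φ l ih =>
    obtain ⟨hp, hm, hd⟩ := h φ List.mem_cons_self
    obtain ⟨ihp, ihm, ihd⟩ := ih fun ψ hψ => h ψ (List.mem_cons_of_mem φ hψ)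
    exact ⟨Finset.union_subset hp ihp, Finset.union_subset hm ihm, max_le hd ihd⟩

theorem InFragment.iConj {ι : Type*} [Fintype ι] {g : ι → ModalForm}
    (h : ∀ i, InFragment Pp Pm n (g i)) : InFragment Pp Pm n (iConj g) :=
  InFragment.bigAnd <| by simpa using h

theorem InFragment.iDisj {ι : Type*} [Fintype ι] {g : ι → ModalForm}
    (h : ∀ i, InFragment Pp Pm n (g i)) : InFragment Pp Pm n (iDisj g) :=
  InFragment.bigOr <| by simpa using h

theorem InFragment.box {φ : ModalForm} (h : InFragment Pp Pm n φ) :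
    InFragment Pp Pm (n + 1) (box φ) :=
  ⟨h.1, h.2.1, Nat.succ_le_succ h.2.2⟩

theorem InFragment.dia {φ : ModalForm} (h : InFragment Pp Pm n φ) :
    InFragment Pp Pm (n + 1) (dia φ) :=
  ⟨h.1, h.2.1, Nat.succ_le_succ h.2.2⟩

end ModalForm

namespace KModel

open ModalForm

variable (M : KModel) (w : M.W)

theorem sat_bigAnd (l : List ModalForm) : M.Sat w (bigAnd l) ↔ ∀ φ ∈ l, M.Sat w φ := by
  induction l with
  | nil => simp [bigAnd, top, Sat]
  | cons φ l ih => simp [bigAnd, Sat, ih]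

theorem sat_bigOr (l : List ModalForm) : M.Sat w (bigOr l) ↔ ∃ φ ∈ l, M.Sat w φ := by
  induction l with
  | nil => simp [bigOr, Sat]
  | cons φ l ih => simp [bigOr, Sat, ih]

theorem sat_iConj {ι : Type*} [Fintype ι] (g : ι → ModalForm) :
    M.Sat w (iConj g) ↔ ∀ i, M.Sat w (g i) := by
  simp [iConj, sat_bigAnd]

theorem sat_iDisj {ι : Type*} [Fintype ι] (g : ι → ModalForm) :
    M.Sat w (iDisj g) ↔ ∃ i, M.Sat w (g i) := by
  simp [iDisj, sat_bigOr]

theorem sat_dia (φ : ModalForm) : M.Sat w (dia φ) ↔ ∃ y, M.R w y ∧ M.Sat y φ := by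
  simp [dia, Sat]

end KModel

namespace ModalArrow

open ModalForm

variable {Pp Pm : Finset ℕ} {n : ℕ} {M0 M1 : KModel} {w0 : M0.W} {w1 : M1.W}

theorem sat_of_inFragment (h : ModalArrow Pp Pm n M0 w0 M1 w1) {φ : ModalForm}
    (hφ : InFragment Pp Pm n φ) (hsat : M0.Sat w0 φ) : M1.Sat w1 φ :=
  h φ hφ.1 hφ.2.1 hφ.2.2 hsat

theorem exists_separating_of_not (h : ¬ ModalArrow Pp Pm n M0 w0 M1 w1) :
    ∃ φ, InFragment Pp Pm n φ ∧ M0.Sat w0 φ ∧ ¬ M1.Sat w1 φ := by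
  simpa [ModalArrow, InFragment, and_assoc] using h

theorem mono {m : ℕ} (h : ModalArrow Pp Pm n M0 w0 M1 w1) (hmn : m ≤ n) :
    ModalArrow Pp Pm m M0 w0 M1 w1 :=
  fun φ hp hm hd => h φ hp hm (hd.trans hmn)

/-- Forth condition: a `◇` of the conjunction of formulas separating `u0` from each successor
of `w1` would hold at `w0` but not at `w1`. -/
theorem exists_forth (h : ModalArrow Pp Pm (n + 1) M0 w0 M1 w1)
    (hfin : {u | M1.R w1 u}.Finite) {u0 : M0.W} (hu0 : M0.R w0 u0) :
    ∃ u1, M1.R w1 u1 ∧ ModalArrow Pp Pm n M0 u0 M1 u1 := by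
  by_contra! hnone
  have := hfin.fintype
  choose g hg using fun u1 : {u | M1.R w1 u} => exists_separating_of_not (hnone u1 u1.2)
  have hΦ : InFragment Pp Pm n (iConj g) := .iConj fun u1 => (hg u1).1
  have hw0 : M0.Sat w0 (dia (iConj g)) :=
    (M0.sat_dia w0 _).2 ⟨u0, hu0, (M0.sat_iConj u0 g).2 fun u1 => (hg u1).2.1⟩
  obtain ⟨u1, hu1, hsat⟩ := (M1.sat_dia w1 _).1 (h.sat_of_inFragment hΦ.dia hw0)
  exact (hg ⟨u1, hu1⟩).2.2 ((M1.sat_iConj u1 g).1 hsat ⟨u1, hu1⟩)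

/-- Back condition: a `□` of the disjunction of formulas separating each successor of `w0`
from `u1` would hold at `w0` but not at `w1`. -/
theorem exists_back (h : ModalArrow Pp Pm (n + 1) M0 w0 M1 w1)
    (hfin : {u | M0.R w0 u}.Finite) {u1 : M1.W} (hu1 : M1.R w1 u1) :
    ∃ u0, M0.R w0 u0 ∧ ModalArrow Pp Pm n M0 u0 M1 u1 := by
  by_contra! hnone
  have := hfin.fintype
  choose g hg using fun u0 : {u | M0.R w0 u} => exists_separating_of_not (hnone u0 u0.2)
  have hΦ : InFragment Pp Pm n (iDisj g) := .iDisj fun u0 => (hg u0).1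
  have hw0 : M0.Sat w0 (box (iDisj g)) := fun u0 hu0 =>
    (M0.sat_iDisj u0 g).2 ⟨⟨u0, hu0⟩, (hg ⟨u0, hu0⟩).2.1⟩
  obtain ⟨u0, hsat⟩ := (M1.sat_iDisj u1 g).1 (h.sat_of_inFragment hΦ.box hw0 u1 hu1)
  exact (hg u0).2.2 hsat

end ModalArrow

theorem pMorphism_of_surjective {F G : KFrame} {f : F.W → G.W} (hF : ∀ x y, F.R x y)
    (hG : ∀ x y, G.R x y) (hf : Function.Surjective f) : PMorphism F G f :=
  ⟨fun x y _ => hG (f x) (f y), fun x w _ => (hf w).imp fun z hz => ⟨hF x z, hz⟩⟩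

def matchingFrame (Pp Pm : Finset ℕ) (M0 M1 : KModel) (w0 : M0.W) (w1 : M1.W)
    (h : ModalArrow Pp Pm 0 M0 w0 M1 w1) : KFrame where
  W := {p : M0.W × M1.W // ModalArrow Pp Pm 0 M0 p.1 M1 p.2}
  R _ _ := True
  nonempty := ⟨⟨(w0, w1), h⟩⟩
  refl _ := trivial
  trans _ _ _ _ _ := trivial

theorem stmt8 : EnjoysIP C_S5 1 := by
  intro Pp Pm M0 M1 ⟨hfin0, htot0⟩ ⟨hfin1, htot1⟩ w0 w1 harr
  have h0 : ModalArrow Pp Pm 0 M0 w0 M1 w1 := harr.mono zero_le_one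
  have hsurj0 (u0 : M0.W) : ∃ u1, ModalArrow Pp Pm 0 M0 u0 M1 u1 :=
    (harr.exists_forth (Set.toFinite _) (htot0 w0 u0)).imp fun _ => And.right
  have hsurj1 (u1 : M1.W) : ∃ u0, ModalArrow Pp Pm 0 M0 u0 M1 u1 :=
    (harr.exists_back (Set.toFinite _) (htot1 w1 u1)).imp fun _ => And.right
  refine ⟨matchingFrame Pp Pm M0 M1 w0 w1 h0, ⟨(w0, w1), h0⟩, fun p => p.1.1, fun p => p.1.2,
    fun _ => ⟨Subtype.finite, fun _ _ => trivial⟩,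
    pMorphism_of_surjective (fun _ _ => trivial) htot0 fun u0 => ?_,
    pMorphism_of_surjective (fun _ _ => trivial) htot1 fun u1 => ?_, rfl, rfl, fun p => p.2⟩
  · obtain ⟨u1, h⟩ := hsurj0 u0
    exact ⟨⟨(u0, u1), h⟩, rfl⟩
  · obtain ⟨u0, h⟩ := hsurj1 u1
    exact ⟨⟨(u0, u1), h⟩, rfl⟩
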